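/- arXiv:1906.00843 — 2 statements merged into one kernel-verified Lean document; each statement's English description precedes it below -/
import Mathlib

section
/- Let κ be a regular uncountable cardinal with κ = κ^{<κ}. Then there exists a sequence (v_α)_{α<κ} of slaloms, each with domain all of κ (so v_α : κ → [κ]^{<κ} \ {∅}), which is ⊆*-decreasing (v_β ⊆* v_α for α < β < κ) and has no lower bound supported on a stationary set: there is no stationary set S ⊆ κ and function w : S → [κ]^{<κ} \ {∅} such that w ⊆* v_α for all α < κ. -/
/-!
Let `v_α ξ = [α, ξ)` for `α < ξ`. If `w ⊆* v_α` for all `α < κ`, regularity of `κ` gives `g a`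
with `w ξ ⊆ [a, ξ)` whenever `ξ ∈ dom w`, `a < ξ` and `g a ≤ ξ`. The closure points of a function
`h` with `h a > max (g a) a` form a club, so the stationary set `dom w` contains such a closure
point `ξ > a₀`. Any `η ∈ w ξ` then satisfies `η < ξ`, hence `h η < ξ`, hence `w ξ ⊆ [h η, ξ)`,
so `h η ≤ η`: a contradiction. This is the pressing-down argument for the regressive choice
`ξ ↦ η ∈ w ξ`.
-/

noncomputable section

open Cardinal Set

universe u

namespace PT

/-- `A ⊆* B` (mod `< κ`): all but fewer than `κ` many elements of `A` lie in `B`. -/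
def AlmostSub (κ : Cardinal.{u}) (A B : Set κ.ord.ToType) : Prop :=
  #(↥(A \ B)) < κ

/-- `A` is a pseudo-intersection of the family `F`:
it has size `κ` and is almost contained in every member of `F`. -/
def IsPseudoInter (κ : Cardinal.{u}) (F : Set (Set κ.ord.ToType)) (A : Set κ.ord.ToType) : Prop :=
  #(↥A) = κ ∧ ∀ B ∈ F, AlmostSub κ A B

/-- The strong intersection property: every subfamily of size `< κ`
has intersection of size `κ`. -/
def HasSIP (κ : Cardinal.{u}) (F : Set (Set κ.ord.ToType)) : Prop :=
  ∀ G ⊆ F, #(↥G) < κ → #(↥(⋂₀ G)) = κ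

/-- `F` is a witness for the pseudo-intersection number: a family of `κ`-sized
subsets of `κ` with the SIP and no pseudo-intersection of size `κ`. -/
def PWitness (κ : Cardinal.{u}) (F : Set (Set κ.ord.ToType)) : Prop :=
  (∀ A ∈ F, #(↥A) = κ) ∧ HasSIP κ F ∧ ¬∃ A, IsPseudoInter κ F A

/-- The pseudo-intersection number `𝔭(κ)`. -/
def pNumber (κ : Cardinal.{u}) : Cardinal.{u} :=
  sInf {c | ∃ F, PWitness κ F ∧ #(↥F) = c}

/-- A tower of length `δ`: a `⊆*`-decreasing sequence of `κ`-sized subsets of `κ`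
with the SIP and no pseudo-intersection of size `κ`. -/
def TowerSeq (κ : Cardinal.{u}) (δ : Ordinal.{u}) (T : Ordinal.{u} → Set κ.ord.ToType) : Prop :=
  (∀ α < δ, #(↥(T α)) = κ) ∧
  (∀ α < δ, ∀ β < δ, α ≤ β → AlmostSub κ (T β) (T α)) ∧
  HasSIP κ (T '' Iio δ) ∧
  ¬∃ A, IsPseudoInter κ (T '' Iio δ) A

/-- The tower number `𝔱(κ)`: the minimal size of a tower of subsets of `κ`. -/
def tNumber (κ : Cardinal.{u}) : Cardinal.{u} :=
  sInf {c | ∃ δ T, TowerSeq κ δ T ∧ #(↥(T '' Iio δ)) = c}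

/-- `C` is a club (closed unbounded set) in `κ`. -/
def IsClubIn (κ : Cardinal.{u}) (C : Set κ.ord.ToType) : Prop :=
  (∀ a : κ.ord.ToType, ∃ b ∈ C, a < b) ∧
  ∀ a : κ.ord.ToType, (C ∩ Iio a).Nonempty → IsLUB (C ∩ Iio a) a → a ∈ C

/-- `S` is stationary in `κ`: it meets every club subset of `κ`. -/
def IsStationaryIn (κ : Cardinal.{u}) (S : Set κ.ord.ToType) : Prop :=
  ∀ C, IsClubIn κ C → (S ∩ C).Nonempty

/-- A slalom on `κ`: a map from a domain `X ⊆ κ` into the nonempty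
subsets of `κ` of size `< κ`. -/
structure Slalom (κ : Cardinal.{u}) where
  dom : Set κ.ord.ToType
  fn : κ.ord.ToType → Set κ.ord.ToType
  nonempty_fn : ∀ ξ ∈ dom, (fn ξ).Nonempty
  small_fn : ∀ ξ ∈ dom, #(↥(fn ξ)) < κ

/-- A slalom is club-supported if its domain is a club in `κ`. -/
def Slalom.ClubSupported {κ : Cardinal.{u}} (s : Slalom κ) : Prop :=
  IsClubIn κ s.dom

/-- `u ⊆* v` for slaloms: `u ξ ⊆ v ξ` for all but fewer than `κ` many
`ξ ∈ dom u ∩ dom v`. -/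
def Slalom.SubStar {κ : Cardinal.{u}} (s t : Slalom κ) : Prop :=
  #(↥{ξ : κ.ord.ToType | ξ ∈ s.dom ∩ t.dom ∧ ¬s.fn ξ ⊆ t.fn ξ}) < κ

/-- A club-supported `(μ, ν)`-gap of slaloms. -/
def ClubGap (κ μ ν : Cardinal.{u}) (u v : Ordinal.{u} → Slalom κ) : Prop :=
  (∀ γ < μ.ord, (u γ).ClubSupported) ∧
  (∀ α < ν.ord, (v α).ClubSupported) ∧
  (∀ γ γ', γ < γ' → γ' < μ.ord → (u γ).SubStar (u γ')) ∧
  (∀ α α', α < α' → α' < ν.ord → (v α').SubStar (v α)) ∧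
  (∀ γ < μ.ord, ∀ α < ν.ord, (u γ).SubStar (v α)) ∧
  ¬∃ w : Slalom κ, w.ClubSupported ∧ (∀ γ < μ.ord, (u γ).SubStar w) ∧
    ∀ α < ν.ord, w.SubStar (v α)

/-- `f ≤* g`: `f ξ ≤ g ξ` for all but fewer than `κ` many `ξ < κ`. -/
def LeStar (κ : Cardinal.{u}) (f g : κ.ord.ToType → κ.ord.ToType) : Prop :=
  #(↥{ξ : κ.ord.ToType | ¬f ξ ≤ g ξ}) < κ

/-- The bounding number `𝔟(κ)`. -/
def bNumber (κ : Cardinal.{u}) : Cardinal.{u} :=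
  sInf {c | ∃ B : Set (κ.ord.ToType → κ.ord.ToType),
    (¬∃ g, ∀ f ∈ B, LeStar κ f g) ∧ #(↥B) = c}

/-- `𝔭_cl(κ)`: minimal size of a family of clubs in `κ` with no
pseudo-intersection of size `κ`. -/
def pClNumber (κ : Cardinal.{u}) : Cardinal.{u} :=
  sInf {c | ∃ F : Set (Set κ.ord.ToType), (∀ C ∈ F, IsClubIn κ C) ∧
    (¬∃ A, IsPseudoInter κ F A) ∧ #(↥F) = c}

/-- `𝔱_cl(κ)`: minimal size of a `⊆*`-well-ordered family of clubs in `κ`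
with no pseudo-intersection of size `κ`. -/
def tClNumber (κ : Cardinal.{u}) : Cardinal.{u} :=
  sInf {c | ∃ (δ : Ordinal.{u}) (T : Ordinal.{u} → Set κ.ord.ToType),
    (∀ α < δ, IsClubIn κ (T α)) ∧
    (∀ α < δ, ∀ β < δ, α ≤ β → AlmostSub κ (T β) (T α)) ∧
    (¬∃ A, IsPseudoInter κ (T '' Iio δ) A) ∧ #(↥(T '' Iio δ)) = c}


/-- `F` is a `κ`-complete filter on `κ`: it contains `κ`, is closed upwards,
and is closed under intersections of fewer than `κ` of its members. -/
def IsKappaCompleteFilter (κ : Cardinal.{u}) (F : Set (Set κ.ord.ToType)) : Prop :=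
  Set.univ ∈ F ∧ (∀ A ∈ F, ∀ B, A ⊆ B → B ∈ F) ∧
  ∀ G ⊆ F, #(↥G) < κ → ⋂₀ G ∈ F



/-- `𝔭_F(κ)`: minimal size of a subfamily of `F` with no pseudo-intersection. -/
def pFNumber (κ : Cardinal.{u}) (F : Set (Set κ.ord.ToType)) : Cardinal.{u} :=
  sInf {c | ∃ B ⊆ F, (¬∃ A, IsPseudoInter κ B A) ∧ #(↥B) = c}

/-- The finite intersection property. -/
def HasFIP (κ : Cardinal.{u}) (F : Set (Set κ.ord.ToType)) : Prop :=
  ∀ G ⊆ F, G.Finite → #(↥(⋂₀ G)) = κ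

/-- `𝔭*(κ)`. -/
def pStarNumber (κ : Cardinal.{u}) : Cardinal.{u} :=
  sInf {c | ∃ F : Set (Set κ.ord.ToType), (∀ A ∈ F, #(↥A) = κ) ∧ HasFIP κ F ∧
    (¬∃ A, IsPseudoInter κ F A) ∧ #(↥F) = c}



/-- `𝔱*(κ)`. -/
def tStarNumber (κ : Cardinal.{u}) : Cardinal.{u} :=
  sInf {c | ∃ (δ : Ordinal.{u}) (T : Ordinal.{u} → Set κ.ord.ToType),
    (∀ α < δ, #(↥(T α)) = κ) ∧
    (∀ α < δ, ∀ β < δ, α ≤ β → AlmostSub κ (T β) (T α)) ∧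
    (¬∃ A, IsPseudoInter κ (T '' Iio δ) A) ∧ #(↥(T '' Iio δ)) = c}

/-- `D` is dense in the poset `P`. -/
def DenseBelow {P : Type u} [Preorder P] (D : Set P) : Prop :=
  ∀ p : P, ∃ q ∈ D, q ≤ p

/-- Two conditions are compatible: they have a common extension. -/
def Compat {P : Type u} [Preorder P] (p q : P) : Prop :=
  ∃ r, r ≤ p ∧ r ≤ q

/-- A filter on a poset: upward closed and downward directed. -/
def IsPosetFilter {P : Type u} [Preorder P] (G : Set P) : Prop :=
  (∀ p ∈ G, ∀ q, p ≤ q → q ∈ G) ∧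
  ∀ p ∈ G, ∀ q ∈ G, ∃ r ∈ G, r ≤ p ∧ r ≤ q

/-- A set `C` of conditions is `κ`-directed: every subset of `C` of size `< κ`
has a lower bound (in `P`). -/
def KDirected (κ : Cardinal.{u}) {P : Type u} [Preorder P] (C : Set P) : Prop :=
  ∀ D ⊆ C, #(↥D) < κ → ∃ q : P, ∀ p ∈ D, q ≤ p

/-- `P` is `κ`-centered with canonical lower bounds. -/
def KCenteredCanonical (κ : Cardinal.{u}) (P : Type u) [Preorder P] : Prop :=
  ∃ C : Ordinal.{u} → Set P,
    (∀ p : P, ∃ γ < κ.ord, p ∈ C γ) ∧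
    (∀ γ < κ.ord, KDirected κ (C γ)) ∧
    ∃ f : Ordinal.{u} → (Ordinal.{u} → Ordinal.{u}) → Ordinal.{u},
      ∀ δ < κ.ord, ∀ (p : Ordinal.{u} → P) (g : Ordinal.{u} → Ordinal.{u}),
        (∀ α < δ, g α < κ.ord ∧ p α ∈ C (g α)) →
        (∀ α < δ, ∀ β < δ, α ≤ β → p β ≤ p α) →
        f δ g < κ.ord ∧ ∃ q ∈ C (f δ g), ∀ α < δ, q ≤ p α

/-- Below every condition there is an antichain of size `κ`. -/
def KAntichainsBelow (κ : Cardinal.{u}) (P : Type u) [Preorder P] : Prop :=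
  ∀ p : P, ∃ A : Set P, (∀ a ∈ A, a ≤ p) ∧
    (∀ a ∈ A, ∀ b ∈ A, a ≠ b → ¬Compat a b) ∧ #(↥A) = κ



/-- The ordinal corresponding to an element of `o.toType`. -/
def ordOf {o : Ordinal.{u}} (i : o.ToType) : Ordinal.{u} :=
  ((Ordinal.ToType.mk (o := o)).symm i).1

/-- `P` is stationary `κ⁺`-Knaster. -/
def StationaryKnaster (κ : Cardinal.{u}) (P : Type u) [Preorder P] : Prop :=
  ∀ p : (Order.succ κ).ord.ToType → P,
    ∃ (E : Set (Order.succ κ).ord.ToType)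
      (f : (Order.succ κ).ord.ToType → (Order.succ κ).ord.ToType),
      IsClubIn (Order.succ κ) E ∧
      (∀ i ∈ E, (ordOf i).cof = κ → f i < i) ∧
      ∀ i ∈ E, ∀ j ∈ E, (ordOf i).cof = κ → (ordOf j).cof = κ →
        f i = f j → Compat (p i) (p j)

/-- `P` is `κ`-good-Knaster (property `(∗_κ)`). -/
def GoodKnaster (κ : Cardinal.{u}) (P : Type u) [Preorder P] : Prop :=
  StationaryKnaster κ P ∧
  (∀ p : ℕ → P, (∀ m n : ℕ, m ≤ n → p n ≤ p m) → ∃ q, IsGLB (Set.range p) q) ∧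
  (∀ p q : P, Compat p q → ∃ r, IsGLB {p, q} r) ∧
  ∀ δ < κ.ord, ∀ p : Ordinal.{u} → P,
    (∀ α < δ, ∀ β < δ, α ≤ β → p β ≤ p α) → ∃ q, ∀ α < δ, q ≤ p α

/-- `MA(κ-good-Knaster)`. -/
def MAGoodKnaster (κ : Cardinal.{u}) : Prop :=
  ∀ (P : Type u) [PartialOrder P], GoodKnaster κ P →
    ∀ D : Set (Set P), (∀ d ∈ D, DenseBelow d) → #(↥D) < 2 ^ κ →
      ∃ G : Set P, IsPosetFilter G ∧ ∀ d ∈ D, (G ∩ d).Nonempty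

/-- A slalom based on a set `C`. -/
def BasedSlalom (κ : Cardinal.{u}) (C : Set κ.ord.ToType)
    (f : κ.ord.ToType → Set κ.ord.ToType) : Prop :=
  ∀ ξ ∈ C, (f ξ).Nonempty ∧ #(↥(f ξ)) < κ

/-- `f ⊆* g` for `C`-based slaloms. -/
def BasedSubStar (κ : Cardinal.{u}) (C : Set κ.ord.ToType)
    (f g : κ.ord.ToType → Set κ.ord.ToType) : Prop :=
  #(↥{ξ : κ.ord.ToType | ξ ∈ C ∧ ¬f ξ ⊆ g ξ}) < κ

/-- A `(lam, mu)`-tight gap of slaloms based on the club `C`. -/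
def TightGap (κ lam mu : Cardinal.{u}) (C : Set κ.ord.ToType)
    (U V : Ordinal.{u} → κ.ord.ToType → Set κ.ord.ToType) : Prop :=
  IsClubIn κ C ∧
  (∀ α < lam.ord, BasedSlalom κ C (U α)) ∧
  (∀ β < mu.ord, BasedSlalom κ C (V β)) ∧
  (∀ α α', α < α' → α' < lam.ord → ∀ β β', β < β' → β' < mu.ord →
    #(↥{ξ : κ.ord.ToType | ξ ∈ C ∧
      ¬(U α ξ ⊂ U α' ξ ∧ U α' ξ ⊂ V β' ξ ∧ V β' ξ ⊂ V β ξ)}) < κ) ∧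
  (∀ w, BasedSlalom κ C w → (∀ β < mu.ord, BasedSubStar κ C w (V β)) →
    ∃ α < lam.ord, BasedSubStar κ C w (U α)) ∧
  (∀ w, BasedSlalom κ C w → (∀ α < lam.ord, BasedSubStar κ C (U α) w) →
    ∃ β < mu.ord, BasedSubStar κ C (V β) w)

/-- `s_X ξ`: the least element of `X` above `ξ` (junk value `ξ` if none exists). -/
def nextIn (κ : Cardinal.{u}) (X : Set κ.ord.ToType) (ξ : κ.ord.ToType) : κ.ord.ToType :=
  haveI := Classical.dec {η : κ.ord.ToType | η ∈ X ∧ ξ < η}.Nonempty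
  if h : {η : κ.ord.ToType | η ∈ X ∧ ξ < η}.Nonempty then
    wellFounded_lt.min {η : κ.ord.ToType | η ∈ X ∧ ξ < η} h
  else ξ

end PT

section RegularOrder

variable {α : Type*} [LinearOrder α]

theorem exists_forall_lt_of_mk_lt_cof {s : Set α} (hs : #s < Order.cof α) :
    ∃ b, ∀ a ∈ s, a < b :=
  not_isCofinal_iff.1 fun h => (Order.cof_le h).not_gt hs

theorem isClub_Ioi [NoMaxOrder α] (a : α) : IsClub (Ioi a) := by
  refine ⟨fun d hd ⟨t, ht⟩ _ x hx => (hd ht).trans_le (hx.1 ht), fun b => ?_⟩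
  obtain ⟨c, hc⟩ := exists_gt a
  exact ⟨max b c, hc.trans_le (le_max_right b c), le_max_left b c⟩

variable [WellFoundedLT α]

theorem BddAbove.exists_isLUB_of_wellFoundedLT {s : Set α} (hs : BddAbove s) : ∃ x, IsLUB s x :=
  ⟨_, wellFounded_lt.min_mem (upperBounds s) hs,
    fun _ hy => wellFounded_lt.min_le hy⟩

variable [IsRegularCardinalOrder α]

theorem isClub_setOf_forall_lt_apply_lt (hα : ℵ₀ < Order.cof α) (f : α → α) :
    IsClub {x | ∀ y < x, f y < x} := by
  refine ⟨fun d hd _ _ x hx y hy => ?_, fun a => ?_⟩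
  · obtain ⟨t, ht, hyt⟩ := (lt_isLUB_iff hx).1 hy
    exact (hd ht y hyt).trans_le (hx.1 ht)
  · have hstep (x : α) : ∃ z, ∀ y < x, f y < z := by
      refine (exists_forall_lt_of_mk_lt_cof (s := f '' Iio x) ?_).imp
        fun z hz y hy => hz _ (mem_image_of_mem f hy)
      refine mk_image_le.trans_lt ?_
      rw [Order.cof_eq_cardinalMk]
      exact mk_Iio_lt x (by simp)
    choose step hstep using hstep
    set g : ℕ → α := fun n => step^[n] a
    obtain ⟨ξ, hξ⟩ : ∃ ξ, IsLUB (range g) ξ := by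
      obtain ⟨b, hb⟩ := exists_forall_lt_of_mk_lt_cof (s := range g)
        ((countable_range g).le_aleph0.trans_lt hα)
      exact BddAbove.exists_isLUB_of_wellFoundedLT ⟨b, fun y hy => (hb y hy).le⟩
    refine ⟨ξ, fun y hy => ?_, hξ.1 ⟨0, rfl⟩⟩
    obtain ⟨_, ⟨n, rfl⟩, hyn⟩ := (lt_isLUB_iff hξ).1 hy
    calc f y < g (n + 1) := by simpa only [g, Function.iterate_succ_apply'] using hstep _ y hyn
      _ ≤ ξ := hξ.1 ⟨n + 1, rfl⟩

theorem IsStationary.not_forall_eventually_subset_Ico (hα : ℵ₀ < Order.cof α) {S : Set α}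
    (hS : IsStationary S) {w : α → Set α} (hw : ∀ ξ ∈ S, (w ξ).Nonempty) :
    ¬∀ a, ∃ b, ∀ ξ ∈ S, a < ξ → b ≤ ξ → w ξ ⊆ Ico a ξ := by
  intro H
  choose g hg using H
  have := (noTopOrder_iff_noMaxOrder α).1 (Order.cof_ne_one_iff.1 (one_lt_aleph0.trans hα).ne')
  have : Nonempty α := Order.cof_ne_zero_iff.1 (aleph0_pos.trans hα).ne'
  obtain ⟨a₀⟩ := ‹Nonempty α›
  choose f hf using fun y : α => exists_gt (max (g y) y)
  obtain ⟨ξ, hξS, ha₀ξ, hξ⟩ :=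
    hS ((isClub_Ioi a₀).inter hα.ne' (isClub_setOf_forall_lt_apply_lt hα f))
  have hsub (a : α) (ha : a < ξ) : w ξ ⊆ Ico a ξ :=
    hg a ξ hξS ha ((le_max_left _ _).trans_lt ((hf a).trans (hξ a ha))).le
  obtain ⟨η, hη⟩ := hw ξ hξS
  have hηξ : η < ξ := (hsub a₀ ha₀ξ hη).2
  exact ((le_max_right _ _).trans_lt (hf η)).not_ge (hsub (f η) (hξ η hηξ) hη).1

end RegularOrder

namespace PT

section Slaloms

variable {κ : Cardinal.{u}}

theorem ordOf_lt {o : Ordinal.{u}} (i : o.ToType) : ordOf i < o :=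
  ((Ordinal.ToType.mk (o := o)).symm i).2

@[simp]
theorem ordOf_lt_ordOf {o : Ordinal.{u}} {i j : o.ToType} : ordOf i < ordOf j ↔ i < j :=
  (Ordinal.ToType.mk (o := o)).symm.lt_iff_lt

@[simp]
theorem ordOf_le_ordOf {o : Ordinal.{u}} {i j : o.ToType} : ordOf i ≤ ordOf j ↔ i ≤ j :=
  (Ordinal.ToType.mk (o := o)).symm.le_iff_le

@[simp]
theorem ordOf_toTypeMk {o : Ordinal.{u}} (α : Iio o) : ordOf (Ordinal.ToType.mk α) = α := by
  simp [ordOf]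

theorem cof_toType_ord (hreg : κ.IsRegular) : Order.cof κ.ord.ToType = κ := by
  rw [Ordinal.cof_toType, hreg.cof_ord]

theorem isRegularCardinalOrder_toType_ord (hreg : κ.IsRegular) :
    IsRegularCardinalOrder κ.ord.ToType :=
  ⟨by rw [Ordinal.type_toType, cof_toType_ord hreg]⟩

theorem isClubIn_of_isClub (hκ : ℵ₀ ≤ κ) {C : Set κ.ord.ToType} (hC : IsClub C) :
    IsClubIn κ C := by
  have := Cardinal.noMaxOrder hκ
  refine ⟨fun a => ?_, fun a hne hlub => hC.isLUB_mem inter_subset_left hne hlub⟩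
  obtain ⟨b, hb⟩ := exists_gt a
  obtain ⟨c, hc, hbc⟩ := hC.isCofinal b
  exact ⟨c, hc, hb.trans_le hbc⟩

theorem IsStationaryIn.isStationary (hκ : ℵ₀ ≤ κ) {S : Set κ.ord.ToType}
    (hS : IsStationaryIn κ S) : IsStationary S :=
  fun _ hC => hS _ (isClubIn_of_isClub hκ hC)

theorem mk_Iic_lt (hκ : ℵ₀ ≤ κ) (x : κ.ord.ToType) : #(Iic x) < κ := by
  have := Cardinal.noMaxOrder hκ
  obtain ⟨y, hy⟩ := exists_gt x
  exact (mk_le_mk_of_subset (show Iic x ⊆ Iio y from fun _ hz => hz.trans_lt hy)).trans_lt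
    (by simpa using mk_Iio_lt y)

/-- The value `{ξ}` for `ordOf ξ ≤ α` only keeps the slalom nonempty-valued. -/
def tailSlalom (hκ : ℵ₀ ≤ κ) (α : Ordinal.{u}) : Slalom κ where
  dom := univ
  fn ξ := if α < ordOf ξ then {η | α ≤ ordOf η ∧ η < ξ} else {ξ}
  nonempty_fn ξ _ := by
    split_ifs with h
    · refine ⟨Ordinal.ToType.mk ⟨α, h.trans (ordOf_lt ξ)⟩, by simp, ?_⟩
      rwa [← ordOf_lt_ordOf, ordOf_toTypeMk]
    · exact singleton_nonempty ξ
  small_fn ξ _ := by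
    split_ifs
    · exact (mk_le_mk_of_subset (show _ ⊆ Iio ξ from fun _ hη => hη.2)).trans_lt
        (by simpa using mk_Iio_lt ξ)
    · exact (mk_singleton ξ).trans_lt (one_lt_aleph0.trans_le hκ)

theorem tailSlalom_fn_of_lt (hκ : ℵ₀ ≤ κ) {α : Ordinal.{u}} {ξ : κ.ord.ToType}
    (h : α < ordOf ξ) :
    (tailSlalom hκ α).fn ξ = {η | α ≤ ordOf η ∧ η < ξ} :=
  if_pos h

theorem tailSlalom_ordOf_fn (hκ : ℵ₀ ≤ κ) {a ξ : κ.ord.ToType} (h : a < ξ) :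
    (tailSlalom hκ (ordOf a)).fn ξ = Ico a ξ := by
  rw [tailSlalom_fn_of_lt hκ (ordOf_lt_ordOf.2 h)]
  simp only [ordOf_le_ordOf, Ico]

theorem tailSlalom_subStar (hκ : ℵ₀ ≤ κ) {α β : Ordinal.{u}} (hαβ : α < β) (hβ : β < κ.ord) :
    (tailSlalom hκ β).SubStar (tailSlalom hκ α) := by
  refine (mk_le_mk_of_subset fun ξ hξ => ?_).trans_lt
    (mk_Iic_lt hκ (Ordinal.ToType.mk ⟨β, hβ⟩))
  rw [mem_Iic, ← ordOf_le_ordOf, ordOf_toTypeMk]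
  by_contra! h
  refine hξ.2 ?_
  rw [tailSlalom_fn_of_lt hκ h, tailSlalom_fn_of_lt hκ (hαβ.trans h)]
  exact fun η hη => ⟨hαβ.le.trans hη.1, hη.2⟩

theorem Slalom.exists_forall_subset_Ico_of_subStar (hreg : κ.IsRegular) {w : Slalom κ}
    {a : κ.ord.ToType} (hw : w.SubStar (tailSlalom hreg.aleph0_le (ordOf a))) :
    ∃ b, ∀ ξ ∈ w.dom, a < ξ → b ≤ ξ → w.fn ξ ⊆ Ico a ξ := by
  obtain ⟨b, hb⟩ := exists_forall_lt_of_mk_lt_cof (hw.trans_eq (cof_toType_ord hreg).symm)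
  refine ⟨b, fun ξ hξ ha hb' => ?_⟩
  by_contra h
  exact (hb ξ ⟨⟨hξ, mem_univ ξ⟩, by rwa [tailSlalom_ordOf_fn _ ha]⟩).not_ge hb'

end Slaloms

theorem exists_decreasing_slaloms_no_stationary_bound_general (κ : Cardinal.{u})
    (hreg : κ.IsRegular) (hunc : ℵ₀ < κ) :
    ∃ v : Ordinal.{u} → Slalom κ,
      (∀ α < κ.ord, (v α).dom = Set.univ) ∧
      (∀ α β, α < β → β < κ.ord → (v β).SubStar (v α)) ∧
      ¬∃ w : Slalom κ, IsStationaryIn κ w.dom ∧ ∀ α < κ.ord, w.SubStar (v α) := by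
  refine ⟨tailSlalom hreg.aleph0_le, fun _ _ => rfl,
    fun _ _ hαβ hβ => tailSlalom_subStar _ hαβ hβ, ?_⟩
  rintro ⟨w, hS, hw⟩
  have := isRegularCardinalOrder_toType_ord hreg
  exact (hS.isStationary hreg.aleph0_le).not_forall_eventually_subset_Ico
    ((cof_toType_ord hreg).symm ▸ hunc) w.nonempty_fn
    fun a => w.exists_forall_subset_Ico_of_subStar hreg (hw _ (ordOf_lt a))

/-- Let κ = κ^{<κ} be regular uncountable. Then there is a ⊆*-decreasing
κ-sequence of slaloms with full domain that has no lower bound supported on a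
stationary set. -/
theorem exists_decreasing_slaloms_no_stationary_bound (κ : Cardinal.{u})
    (hreg : κ.IsRegular) (hunc : ℵ₀ < κ) (hpow : κ ^< κ = κ) :
    ∃ v : Ordinal.{u} → Slalom κ,
      (∀ α < κ.ord, (v α).dom = Set.univ) ∧
      (∀ α β, α < β → β < κ.ord → (v β).SubStar (v α)) ∧
      ¬∃ w : Slalom κ, IsStationaryIn κ w.dom ∧ ∀ α < κ.ord, w.SubStar (v α) :=
  exists_decreasing_slaloms_no_stationary_bound_general κ hreg hunc

end PT
end
end

section
/- Let κ be a regular uncountable cardinal. Then p_cl(κ) = t_cl(κ) = b(κ). -/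
noncomputable section

open Cardinal Set

universe u

namespace PT

/-!
For a club `C` write `s_C = nextIn κ C`. The closure points of any `g : κ → κ` form a club, and
if `s_C ≤* g` then almost every closure point of `g` is a limit of `C`, hence lies in `C`. So fewer
than `𝔟(κ)` clubs have a pseudo-intersection: the closure points of a common `≤*`-bound of
their functions `s_C`. Conversely, a `≤*`-increasing `≤*`-unbounded sequence `(g_α)_{α < 𝔟(κ)}`
yields the `⊆*`-decreasing tower of clubs of closure points of the `g_α`; a pseudo-intersection
`A` of it would give a function `s_A` bounding every `g_α`.
-/

variable {κ : Cardinal.{u}}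

theorem mk_lt_iff_exists_forall_lt (hreg : κ.IsRegular) {S : Set κ.ord.ToType} :
    #S < κ ↔ ∃ b, ∀ x ∈ S, x < b := by
  constructor
  · intro h
    by_contra! hS
    refine (Order.cof_le (s := S) fun a => ?_).not_gt (by rwa [Ordinal.cof_toType, hreg.cof_ord])
    simpa using hS a
  · rintro ⟨b, hb⟩
    exact (mk_le_mk_of_subset (t := Iio b) hb).trans_lt (by simpa using mk_Iio_lt b (by simp))

theorem mk_eq_iff_forall_exists_gt (hreg : κ.IsRegular) {S : Set κ.ord.ToType} :
    #S = κ ↔ ∀ a, ∃ b ∈ S, a < b := by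
  have := Cardinal.noMaxOrder hreg.aleph0_le
  rw [← not_iff_not, ← ne_eq, ← ((mk_set_le S).trans_eq (mk_ord_toType κ)).lt_iff_ne,
    mk_lt_iff_exists_forall_lt hreg]
  push Not
  constructor
  · rintro ⟨b, hb⟩
    exact ⟨b, fun x hx => (hb x hx).le⟩
  · rintro ⟨a, ha⟩
    obtain ⟨b, hab⟩ := exists_gt a
    exact ⟨b, fun x hx => (ha x hx).trans_lt hab⟩

theorem almostSub_iff (hreg : κ.IsRegular) {A B : Set κ.ord.ToType} :
    AlmostSub κ A B ↔ ∃ η, ∀ ξ ∈ A, η ≤ ξ → ξ ∈ B := by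
  simp only [AlmostSub, mk_lt_iff_exists_forall_lt hreg, mem_sdiff, and_imp]
  refine exists_congr fun η => forall₂_congr fun ξ _ => ?_
  rw [not_imp_comm, not_lt]

theorem leStar_iff (hreg : κ.IsRegular) {f g : κ.ord.ToType → κ.ord.ToType} :
    LeStar κ f g ↔ ∃ η, ∀ ξ, η ≤ ξ → f ξ ≤ g ξ := by
  simp only [LeStar, mk_lt_iff_exists_forall_lt hreg, mem_ofPred_eq]
  refine exists_congr fun η => forall_congr' fun ξ => ?_
  rw [not_imp_comm, not_lt]

theorem almostSub_refl (hκ : 0 < κ) (A : Set κ.ord.ToType) : AlmostSub κ A A := by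
  simpa [AlmostSub] using hκ

theorem AlmostSub.trans (hκ : ℵ₀ ≤ κ) {A B C : Set κ.ord.ToType}
    (hAB : AlmostSub κ A B) (hBC : AlmostSub κ B C) : AlmostSub κ A C :=
  calc #↥(A \ C) ≤ #↥(A \ B ∪ B \ C) := mk_le_mk_of_subset (sdiff_triangle A B C)
    _ ≤ #↥(A \ B) + #↥(B \ C) := mk_union_le _ _
    _ < κ := add_lt_of_lt hκ hAB hBC

theorem LeStar.trans (hκ : ℵ₀ ≤ κ) {f g h : κ.ord.ToType → κ.ord.ToType}
    (hfg : LeStar κ f g) (hgh : LeStar κ g h) : LeStar κ f h := by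
  have hsub : {ξ | ¬f ξ ≤ h ξ} ⊆ {ξ | ¬f ξ ≤ g ξ} ∪ {ξ | ¬g ξ ≤ h ξ} := fun ξ hξ =>
    (em (f ξ ≤ g ξ)).elim (fun hf => Or.inr fun hg => hξ (hf.trans hg)) Or.inl
  calc #{ξ | ¬f ξ ≤ h ξ} ≤ #↥({ξ | ¬f ξ ≤ g ξ} ∪ {ξ | ¬g ξ ≤ h ξ}) := mk_le_mk_of_subset hsub
    _ ≤ #{ξ | ¬f ξ ≤ g ξ} + #{ξ | ¬g ξ ≤ h ξ} := mk_union_le _ _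
    _ < κ := add_lt_of_lt hκ hfg hgh

theorem nextIn_mem_and_lt {A : Set κ.ord.ToType} (hA : ∀ a, ∃ b ∈ A, a < b) (ξ : κ.ord.ToType) :
    nextIn κ A ξ ∈ A ∧ ξ < nextIn κ A ξ := by
  have hne : {η | η ∈ A ∧ ξ < η}.Nonempty := hA ξ
  rw [nextIn, dif_pos hne]
  exact wellFounded_lt.min_mem _ hne

theorem IsClubIn.mem_of_forall_nextIn_lt {C : Set κ.ord.ToType} (hC : IsClubIn κ C)
    {c₀ ξ : κ.ord.ToType} (hc₀ : c₀ < ξ) (h : ∀ c < ξ, nextIn κ C c < ξ) : ξ ∈ C := by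
  refine hC.2 ξ ⟨_, (nextIn_mem_and_lt hC.1 c₀).1, h c₀ hc₀⟩ ⟨fun x hx => hx.2.le, fun b hb => ?_⟩
  by_contra! hbξ
  exact (hb ⟨(nextIn_mem_and_lt hC.1 b).1, h b hbξ⟩).not_gt (nextIn_mem_and_lt hC.1 b).2

def closurePoints (κ : Cardinal.{u}) (g : κ.ord.ToType → κ.ord.ToType) : Set κ.ord.ToType :=
  {ξ | ∀ ρ < ξ, g ρ < ξ}

theorem exists_forall_le_lt (hreg : κ.IsRegular) (g : κ.ord.ToType → κ.ord.ToType)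
    (b : κ.ord.ToType) : ∃ c, ∀ ρ ≤ b, g ρ < c := by
  have := Cardinal.noMaxOrder hreg.aleph0_le
  obtain ⟨b', hb'⟩ := exists_gt b
  have hIic : #(Iic b) < κ := (mk_lt_iff_exists_forall_lt hreg).2 ⟨b', fun ρ hρ => hρ.trans_lt hb'⟩
  obtain ⟨c, hc⟩ := (mk_lt_iff_exists_forall_lt hreg).1 (mk_image_le.trans_lt hIic)
  exact ⟨c, fun ρ hρ => hc _ (mem_image_of_mem g hρ)⟩

theorem isClubIn_closurePoints (hreg : κ.IsRegular) (hunc : ℵ₀ < κ)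
    (g : κ.ord.ToType → κ.ord.ToType) : IsClubIn κ (closurePoints κ g) := by
  refine ⟨fun a => ?_, fun a _ ha ρ hρ => ?_⟩
  · -- `next x` lies above `x` and above `g` on `Iic x`.
    choose next hnext using fun x => exists_forall_le_lt hreg (g ⊔ id) x
    let u : ℕ → κ.ord.ToType := fun n => next^[n] a
    have hu (n : ℕ) : u (n + 1) = next (u n) := Function.iterate_succ_apply' next n a
    have hbdd : (upperBounds (range u)).Nonempty := by
      obtain ⟨b, hb⟩ := (mk_lt_iff_exists_forall_lt hreg).1
        ((countable_range u).le_aleph0.trans_lt hunc)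
      exact ⟨b, fun x hx => (hb x hx).le⟩
    set s := wellFounded_lt.min _ hbdd
    have hs : IsLUB (range u) s :=
      ⟨wellFounded_lt.min_mem _ hbdd, fun c hc => not_lt.1 (wellFounded_lt.not_lt_min _ hc)⟩
    refine ⟨s, fun ρ hρ => ?_, ?_⟩
    · obtain ⟨_, ⟨n, rfl⟩, hρn, -⟩ := hs.exists_between hρ
      calc g ρ < u (n + 1) := hu n ▸ (max_lt_iff.1 (hnext _ ρ hρn.le)).1
        _ ≤ s := hs.1 ⟨n + 1, rfl⟩
    · calc a < u 1 := (max_lt_iff.1 (hnext a a le_rfl)).2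
        _ ≤ s := hs.1 ⟨1, rfl⟩
  · obtain ⟨ξ, ⟨hξ, hξa⟩, hρξ, -⟩ := ha.exists_between hρ
    exact (hξ ρ hρξ).trans hξa

theorem closurePoints_almostSub_closurePoints (hreg : κ.IsRegular)
    {f g : κ.ord.ToType → κ.ord.ToType} (h : LeStar κ f g) :
    AlmostSub κ (closurePoints κ g) (closurePoints κ f) := by
  obtain ⟨η, hη⟩ := (leStar_iff hreg).1 h
  obtain ⟨c, hc⟩ := exists_forall_le_lt hreg f η
  refine (almostSub_iff hreg).2 ⟨c, fun ξ hξ hcξ ρ hρ => ?_⟩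
  rcases le_total ρ η with hρη | hηρ
  · exact (hc ρ hρη).trans_le hcξ
  · exact (hη ρ hηρ).trans_lt (hξ ρ hρ)

theorem closurePoints_nextIn_almostSub (hreg : κ.IsRegular) {C : Set κ.ord.ToType}
    (hC : IsClubIn κ C) : AlmostSub κ (closurePoints κ (nextIn κ C)) C := by
  obtain ⟨x⟩ := nonempty_ord_toType hreg.ne_zero
  exact (almostSub_iff hreg).2 ⟨nextIn κ C x, fun ξ hξ hxξ =>
    hC.mem_of_forall_nextIn_lt ((nextIn_mem_and_lt hC.1 x).2.trans_le hxξ) hξ⟩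

theorem leStar_nextIn_of_almostSub_closurePoints (hreg : κ.IsRegular)
    {A : Set κ.ord.ToType} {g : κ.ord.ToType → κ.ord.ToType} (hA : ∀ a, ∃ b ∈ A, a < b)
    (h : AlmostSub κ A (closurePoints κ g)) : LeStar κ g (nextIn κ A) := by
  obtain ⟨η, hη⟩ := (almostSub_iff hreg).1 h
  refine (leStar_iff hreg).2 ⟨η, fun ξ hηξ => ?_⟩
  obtain ⟨hmem, hlt⟩ := nextIn_mem_and_lt hA ξ
  exact (hη _ hmem (hηξ.trans hlt.le) ξ hlt).le

theorem exists_leStar_unbounded (hreg : κ.IsRegular) :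
    ∃ B : Set (κ.ord.ToType → κ.ord.ToType), ¬∃ g, ∀ f ∈ B, LeStar κ f g := by
  have := Cardinal.noMaxOrder hreg.aleph0_le
  refine ⟨Set.univ, fun ⟨g, hg⟩ => ?_⟩
  choose f hf using fun ξ => exists_gt (g ξ)
  have hbad : {ξ | ¬f ξ ≤ g ξ} = Set.univ := eq_univ_of_forall fun ξ => not_le.2 (hf ξ)
  have hf := hg f (mem_univ f)
  rw [LeStar, hbad, mk_univ, mk_ord_toType] at hf
  exact hf.false

theorem exists_leStar_unbounded_mk_eq_bNumber (hreg : κ.IsRegular) :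
    ∃ B : Set (κ.ord.ToType → κ.ord.ToType),
      (¬∃ g, ∀ f ∈ B, LeStar κ f g) ∧ #B = bNumber κ :=
  have ⟨B, hB⟩ := exists_leStar_unbounded hreg
  csInf_mem (s := {c | ∃ B : Set (κ.ord.ToType → κ.ord.ToType),
    (¬∃ g, ∀ f ∈ B, LeStar κ f g) ∧ #B = c}) ⟨_, B, hB, rfl⟩

theorem exists_leStar_bound_of_mk_lt_bNumber {B : Set (κ.ord.ToType → κ.ord.ToType)}
    (h : #B < bNumber κ) : ∃ g, ∀ f ∈ B, LeStar κ f g := by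
  by_contra hB
  exact (csInf_le' ⟨B, hB, rfl⟩ : bNumber κ ≤ #B).not_gt h

theorem le_bNumber (hreg : κ.IsRegular) : κ ≤ bNumber κ := by
  obtain ⟨B, hB, hcard⟩ := exists_leStar_unbounded_mk_eq_bNumber hreg
  rw [← hcard]
  by_contra! h
  choose g hg using fun ξ => (mk_lt_iff_exists_forall_lt hreg).1
    (mk_image_le.trans_lt h : #((fun f => f ξ) '' B) < κ)
  refine hB ⟨g, fun f hf => ?_⟩
  have hgood : {ξ | ¬f ξ ≤ g ξ} = ∅ :=
    eq_empty_of_forall_notMem fun ξ hξ => hξ (hg ξ _ (mem_image_of_mem _ hf)).le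
  rw [LeStar, hgood]
  simpa using hreg.pos

theorem mk_image_Iio_le_card {β : Type u} (f : Ordinal.{u} → β) (o : Ordinal.{u}) :
    #(f '' Iio o) ≤ o.card := by
  have := mk_image_le_lift (f := f) (s := Iio o)
  rwa [mk_Iio_ordinal, lift_lift, lift_le] at this

theorem exists_surjOn_Iio_ord {β : Type u} [Nonempty β] {B : Set β} {c : Cardinal.{u}}
    (hB : #B = c) : ∃ f : Ordinal.{u} → β, SurjOn f (Iio c.ord) B := by
  obtain ⟨e⟩ : Nonempty (Iio c.ord ≃ B) := by
    rw [← lift_mk_eq'.{u + 1, u}, mk_Iio_ordinal, card_ord, hB, lift_lift]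
  classical
  refine ⟨fun α => if h : α ∈ Iio c.ord then (e ⟨α, h⟩).1 else Classical.arbitrary β,
    fun x hx => ⟨e.symm ⟨x, hx⟩, (e.symm ⟨x, hx⟩).2, ?_⟩⟩
  simp only [dif_pos (e.symm ⟨x, hx⟩).2, Subtype.coe_eta, Equiv.apply_symm_apply]

theorem exists_increasing_seq_dominating {β : Type u} (r : β → β → Prop) {c : Cardinal.{u}}
    (hc : ℵ₀ ≤ c) (hbound : ∀ S : Set β, #S < c → ∃ b, ∀ x ∈ S, r x b)
    (f : Ordinal.{u} → β) :
    ∃ g : Ordinal.{u} → β, ∀ γ < c.ord, (∀ α < γ, r (g α) (g γ)) ∧ r (f γ) (g γ) := by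
  have : Nonempty β := ⟨f 0⟩
  obtain ⟨g, hg⟩ : ∃ g : Ordinal.{u} → β,
      ∀ γ, g γ = Classical.epsilon fun b => (∀ α < γ, r (g α) b) ∧ r (f γ) b :=
    ⟨wellFounded_lt.fix fun γ rec =>
      Classical.epsilon fun b => (∀ α (h : α < γ), r (rec α h) b) ∧ r (f γ) b,
      wellFounded_lt.fix_eq _⟩
  refine ⟨g, fun γ hγ => ?_⟩
  rw [hg γ]
  have hsmall : #↥(insert (f γ) (g '' Iio γ)) < c :=
    mk_insert_le.trans_lt <| add_lt_of_lt hc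
      ((mk_image_Iio_le_card g γ).trans_lt (lt_ord.1 hγ)) (one_lt_aleph0.trans_le hc)
  obtain ⟨b, hb⟩ := hbound _ hsmall
  exact Classical.epsilon_spec (p := fun b => (∀ α < γ, r (g α) b) ∧ r (f γ) b)
    ⟨b, fun α hα => hb _ (mem_insert_of_mem _ (mem_image_of_mem g hα)), hb _ (mem_insert _ _)⟩

theorem exists_pseudoInter_of_isClubIn (hreg : κ.IsRegular) (hunc : ℵ₀ < κ)
    {F : Set (Set κ.ord.ToType)} (hF : ∀ C ∈ F, IsClubIn κ C) (hsize : #F < bNumber κ) :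
    ∃ A, IsPseudoInter κ F A := by
  obtain ⟨g, hg⟩ := exists_leStar_bound_of_mk_lt_bNumber (mk_image_le.trans_lt hsize :
    #(nextIn κ '' F) < bNumber κ)
  refine ⟨closurePoints κ g,
    (mk_eq_iff_forall_exists_gt hreg).2 (isClubIn_closurePoints hreg hunc g).1, fun C hC => ?_⟩
  exact (closurePoints_almostSub_closurePoints hreg (hg _ (mem_image_of_mem _ hC))).trans
    hreg.aleph0_le (closurePoints_nextIn_almostSub hreg (hF C hC))

theorem bNumber_le_mk_of_isClubIn (hreg : κ.IsRegular) (hunc : ℵ₀ < κ)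
    {F : Set (Set κ.ord.ToType)} (hF : ∀ C ∈ F, IsClubIn κ C)
    (hF' : ¬∃ A, IsPseudoInter κ F A) : bNumber κ ≤ #F :=
  le_of_not_gt fun h => hF' (exists_pseudoInter_of_isClubIn hreg hunc hF h)

theorem exists_club_tower (hreg : κ.IsRegular) (hunc : ℵ₀ < κ) :
    ∃ (δ : Ordinal.{u}) (T : Ordinal.{u} → Set κ.ord.ToType),
      (∀ α < δ, IsClubIn κ (T α)) ∧
      (∀ α < δ, ∀ β < δ, α ≤ β → AlmostSub κ (T β) (T α)) ∧
      (¬∃ A, IsPseudoInter κ (T '' Iio δ) A) ∧ #(T '' Iio δ) ≤ bNumber κ := by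
  obtain ⟨B, hB, hBcard⟩ := exists_leStar_unbounded_mk_eq_bNumber hreg
  have : Nonempty (κ.ord.ToType → κ.ord.ToType) := ⟨id⟩
  obtain ⟨f, hf⟩ := exists_surjOn_Iio_ord hBcard
  obtain ⟨g, hg⟩ := exists_increasing_seq_dominating (LeStar κ)
    (hreg.aleph0_le.trans (le_bNumber hreg)) (fun _ => exists_leStar_bound_of_mk_lt_bNumber) f
  refine ⟨(bNumber κ).ord, fun α => closurePoints κ (g α),
    fun α _ => isClubIn_closurePoints hreg hunc _, ?_, ?_,
    (mk_image_Iio_le_card _ _).trans_eq (card_ord _)⟩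
  · intro α _ β hβ hαβ
    rcases hαβ.eq_or_lt with rfl | hlt
    · exact almostSub_refl hreg.pos _
    · exact closurePoints_almostSub_closurePoints hreg ((hg β hβ).1 α hlt)
  · rintro ⟨A, hAκ, hA⟩
    refine hB ⟨nextIn κ A, fun h hh => ?_⟩
    obtain ⟨α, hα, rfl⟩ := hf hh
    exact (hg α hα).2.trans hreg.aleph0_le <| leStar_nextIn_of_almostSub_closurePoints hreg
      ((mk_eq_iff_forall_exists_gt hreg).1 hAκ) (hA _ (mem_image_of_mem _ hα))

theorem pClNumber_eq_bNumber (hreg : κ.IsRegular) (hunc : ℵ₀ < κ) :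
    pClNumber κ = bNumber κ := by
  obtain ⟨δ, T, hclub, -, hT, hcard⟩ := exists_club_tower hreg hunc
  have hclub' : ∀ C ∈ T '' Iio δ, IsClubIn κ C := forall_mem_image.2 hclub
  refine le_antisymm (le_trans (csInf_le' ⟨_, hclub', hT, rfl⟩) hcard)
    (le_csInf ⟨_, _, hclub', hT, rfl⟩ ?_)
  rintro _ ⟨F, hF, hF', rfl⟩
  exact bNumber_le_mk_of_isClubIn hreg hunc hF hF'

theorem tClNumber_eq_bNumber (hreg : κ.IsRegular) (hunc : ℵ₀ < κ) :
    tClNumber κ = bNumber κ := by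
  obtain ⟨δ, T, hclub, hdec, hT, hcard⟩ := exists_club_tower hreg hunc
  refine le_antisymm (le_trans (csInf_le' ⟨δ, T, hclub, hdec, hT, rfl⟩) hcard)
    (le_csInf ⟨_, δ, T, hclub, hdec, hT, rfl⟩ ?_)
  rintro _ ⟨δ', T', hclub', -, hT', rfl⟩
  exact bNumber_le_mk_of_isClubIn hreg hunc (forall_mem_image.2 hclub') hT'

/-- Let κ be a regular uncountable cardinal.
Then p_cl(κ) = t_cl(κ) = b(κ). -/
theorem pCl_eq_tCl_eq_bNumber (κ : Cardinal.{u}) (hreg : κ.IsRegular)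
    (hunc : ℵ₀ < κ) :
    pClNumber κ = tClNumber κ ∧ tClNumber κ = bNumber κ :=
  ⟨(pClNumber_eq_bNumber hreg hunc).trans (tClNumber_eq_bNumber hreg hunc).symm,
    tClNumber_eq_bNumber hreg hunc⟩

end PT
end
end
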